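/- arXiv:1301.7177 — 5 statements merged into one kernel-verified Lean document; each statement's English description precedes it below -/
import Mathlib

section
/- The set U_{g+1,n+1} of unicellular maps of genus g+1 with n+1 edges is the disjoint union of three classes: (I) maps where 1 and α(1) lie in different cycles of σ and there exists k with 1 < k < α(1) and α(1) < α(k); (II) maps where 1 and α(1) lie in the same cycle of σ and there exists k with 1 < k < α(1) and α(1) < α(k); (III) maps where 1 and α(1) lie in different cycles of σ and for all k with 1 < k < α(1) one has α(k) < α(1). In particular, if for all k with 1 < k < α(1) one has α(k) < α(1), then 1 and α(1) necessarily lie in different cycles of σ. -/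
/-- Number of cycles of a permutation, counting fixed points as trivial cycles. -/
def cycleCount {β : Type*} [Fintype β] [DecidableEq β] (σ : Equiv.Perm β) : ℕ :=
  σ.cycleType.card + (Finset.univ.filter fun x => σ x = x).card

/-!
Write `a = α(1)` and recall `σ = α ∘ γ` with `γ = (1, 2, …, 2n+2)`. Since `α` is injective,
either some `k ∈ (1, a)` has `α(k) > a`, or all of them have `α(k) < a`; the two cases exclude
each other. In the second case the initial segment `[1, a)` is `σ`-invariant: for `x < a`,
`σ(x) = α(x + 1)` is `α(a) = 1` if `x + 1 = a` and lies below `a` otherwise. So the vertex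
of `1` stays below `a` and does not contain `α(1)`.
-/

open Equiv

theorem Equiv.Perm.not_sameCycle_of_mapsTo {β : Type*} [Finite β] {σ : Perm β} {s : Set β}
    (hs : Set.MapsTo σ s s) {x y : β} (hx : x ∈ s) (hy : y ∉ s) : ¬ σ.SameCycle x y := by
  intro hxy
  obtain ⟨i, rfl⟩ := hxy.exists_nat_pow_eq
  exact hy (Perm.coe_pow σ i ▸ hs.iterate i hx)

namespace UnicellularMap

variable {m : ℕ} {α σ : Perm (Fin (m + 1))}

theorem apply_eq_apply_add_one (hinv : Function.Involutive α)
    (hface : α * σ = finRotate (m + 1)) (x : Fin (m + 1)) : σ x = α (x + 1) := by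
  rw [← finRotate_apply, ← hface, Perm.mul_apply, hinv]

theorem exists_lt_apply_or_forall_apply_lt (α : Perm (Fin (m + 1))) :
    (∃ k : Fin (m + 1), 0 < (k : ℕ) ∧ k < α 0 ∧ α 0 < α k) ∨
      ∀ k : Fin (m + 1), 0 < (k : ℕ) → k < α 0 → α k < α 0 := by
  refine or_iff_not_imp_left.mpr fun hex k hk hka => ?_
  have hne : α k ≠ α 0 := fun h => hk.ne' (congrArg Fin.val (α.injective h))
  exact hne.lt_of_le (not_lt.mp fun hlt => hex ⟨k, hk, hka, hlt⟩)

theorem mapsTo_Iio_apply_zero (hinv : Function.Involutive α) (hfix : α 0 ≠ 0)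
    (hσ : ∀ x, σ x = α (x + 1)) (hall : ∀ k : Fin (m + 1), 0 < (k : ℕ) → k < α 0 → α k < α 0) :
    Set.MapsTo σ (Set.Iio (α 0)) (Set.Iio (α 0)) := by
  intro x (hx : x < α 0)
  have hx_last : x < Fin.last m := hx.trans_le (Fin.le_last _)
  have hsucc : x < x + 1 := Fin.lt_add_one_iff.mpr hx_last
  rw [Set.mem_Iio, hσ]
  rcases (Fin.add_one_le_of_lt hx).eq_or_lt with heq | hlt
  · rw [heq, hinv]
    exact Fin.pos_iff_ne_zero.mpr hfix
  · exact hall (x + 1) (Nat.zero_lt_of_lt hsucc) hlt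

theorem not_sameCycle_zero_apply_zero (hinv : Function.Involutive α) (hfix : α 0 ≠ 0)
    (hface : α * σ = finRotate (m + 1))
    (hall : ∀ k : Fin (m + 1), 0 < (k : ℕ) → k < α 0 → α k < α 0) : ¬ σ.SameCycle 0 (α 0) :=
  Perm.not_sameCycle_of_mapsTo
    (mapsTo_Iio_apply_zero hinv hfix (apply_eq_apply_add_one hinv hface) hall)
    (Fin.pos_iff_ne_zero.mpr hfix) (lt_irrefl (α 0))

end UnicellularMap

open UnicellularMap in
theorem stmt3 (n : ℕ) (α σ : Equiv.Perm (Fin (2 * (n + 1))))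
    (hinv : ∀ x, α (α x) = x) (hfpf : ∀ x, α x ≠ x)
    (hface : α * σ = finRotate (2 * (n + 1))) :
    let h0 : Fin (2 * (n + 1)) := ⟨0, by omega⟩
    let sameV : Prop := Equiv.Perm.SameCycle σ h0 (α h0)
    let exK : Prop := ∃ k : Fin (2 * (n + 1)), 0 < (k : ℕ) ∧ k < α h0 ∧ α h0 < α k
    let allLess : Prop :=
      ∀ k : Fin (2 * (n + 1)), 0 < (k : ℕ) → k < α h0 → α k < α h0
    ((¬ sameV ∧ exK) ∨ (sameV ∧ exK) ∨ (¬ sameV ∧ allLess)) ∧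
      ¬ ((¬ sameV ∧ exK) ∧ (sameV ∧ exK)) ∧
      ¬ ((¬ sameV ∧ exK) ∧ (¬ sameV ∧ allLess)) ∧
      ¬ ((sameV ∧ exK) ∧ (¬ sameV ∧ allLess)) ∧
      (allLess → ¬ sameV) := by
  intro h0 sameV exK allLess
  have hcases : exK ∨ allLess := exists_lt_apply_or_forall_apply_lt α
  have hexcl : ¬ (exK ∧ allLess) := fun ⟨⟨k, hk, hka, hlt⟩, hall⟩ =>
    lt_asymm hlt (hall k hk hka)
  have hsep : allLess → ¬ sameV := not_sameCycle_zero_apply_zero hinv (hfpf h0) hface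
  clear_value h0 sameV exK allLess
  tauto
end

section
/- Let u = ([2n], α, σ) be a unicellular map with boundary cycle γ = α∘σ = (1, 2, …, 2n). Suppose that for all k with 1 < k < α(1) one has α(k) < α(1). Then α restricts to fixed-point-free involutions of H₁ = {1, 2, …, α(1)} and of its complement H₂ = [2n] \ H₁; in particular α(1) is even. -/
/-- Half-edges are `Fin (2*n)` in boundary order: the paper's half-edge
`i ∈ {1,…,2n}` is the index `i-1`, and the boundary cycle `γ = α ∘ σ = (1,2,…,2n)` is
the standard rotation `finRotate (2*n)`.  Suppose that for all `k` with `1 < k < α(1)`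
one has `α(k) < α(1)` (hypothesis `hIII`, with `1` the index `0`).  Then `α` restricts
to (fixed-point-free, since `α` already is one) involutions of
`H₁ = {1,…,α(1)} = {x | x ≤ α 0}` and of its complement `H₂`; in particular the label
`α(1)` is even, i.e. the index `α 0` has odd value. -/
theorem stmt4 (n : ℕ) (hn : 0 < n) (α σ : Equiv.Perm (Fin (2 * n)))
    (hinv : ∀ x, α (α x) = x) (hfpf : ∀ x, α x ≠ x)
    (hface : α * σ = finRotate (2 * n))
    (hIII : ∀ k : Fin (2 * n), 0 < (k : ℕ) → k < α ⟨0, by omega⟩ →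
      α k < α ⟨0, by omega⟩) :
    (∀ x : Fin (2 * n), x ≤ α ⟨0, by omega⟩ → α x ≤ α ⟨0, by omega⟩) ∧
    (∀ x : Fin (2 * n), α ⟨0, by omega⟩ < x → α ⟨0, by omega⟩ < α x) ∧
    Odd ((α ⟨0, by omega⟩ : Fin (2 * n)) : ℕ) := by
  set z : Fin (2 * n) := ⟨0, by omega⟩ with hz
  set a : Fin (2 * n) := α z with ha
  have h1 : ∀ x : Fin (2 * n), x ≤ a → α x ≤ a := by
    intro x hx
    rcases Nat.eq_zero_or_pos (x : ℕ) with h0 | h0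
    · have : x = z := by apply Fin.ext; simpa [hz] using h0
      simp [this, ha]
    · rcases eq_or_lt_of_le hx with rfl | hlt
      · rw [ha, hinv]
        exact Fin.le_def.mpr (Nat.zero_le _)
      · exact le_of_lt (hIII x h0 hlt)
  have h2 : ∀ x : Fin (2 * n), a < x → a < α x := by
    intro x hx
    by_contra h
    push_neg at h
    have := h1 (α x) h
    rw [hinv] at this
    exact absurd hx (not_lt_of_ge this)
  refine ⟨h1, h2, ?_⟩
  have hmem : ∀ x ∈ Finset.Iic a, α x ∈ Finset.Iic a := by
    intro x hx
    simp only [Finset.mem_Iic] at *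
    exact h1 x hx
  have hprod : ∏ _x ∈ Finset.Iic a, (-1 : ℤ) = 1 :=
    Finset.prod_involution (fun x _ => α x) (by norm_num)
      (fun x _ _ => hfpf x) hmem (fun x _ => hinv x)
  rw [Finset.prod_const, Fin.card_Iic] at hprod
  have heven : Even ((a : ℕ) + 1) := by
    by_contra hodd
    rw [Nat.not_even_iff_odd] at hodd
    rw [hodd.neg_one_pow] at hprod
    norm_num at hprod
  exact Nat.not_even_iff_odd.mp (Nat.even_add_one.mp heven)
end

section
/- Let α be a fixed-point-free involution of [2n] such that α restricts to involutions of H₁ = {1, …, 2k} and H₂ = {2k+1, …, 2n}. If γ₁ = α|_{H₁} ∘ σ₁ is a single cycle on H₁ (so ([2k], α|_{H₁}, σ₁) is a unicellular map of genus g₁) and similarly ([2(n−k)], α|_{H₂}, σ₂) is a unicellular map of genus g₂, and one glues the two maps along an edge as in the gluing construction θ (joining the plant vertex of the first map into the minimal vertex of the second), then the resulting map is unicellular and its genus equals g₁ + g₂. -/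
/-- `IsPUMap g n α σ`: `(α, σ)` is a planted unicellular map of genus `g` with `n` edges.
The `2n+2` half-edges are `Fin (2*n+2)`, listed in boundary order: index `0` is the root
half-edge `1_R`, index `i` (for `1 ≤ i ≤ 2n`) is the half-edge labelled `i`, and index
`2n+1` is the plant half-edge `2n_R`.  `α` is a fixed-point-free involution containing
the rainbow cycle `(1_R, 2n_R)`, the boundary (face) permutation `γ = α ∘ σ` is the
single cycle `(1_R, 1, 2, …, 2n, 2n_R)`, i.e. the standard rotation `finRotate`, and the
genus is given by Euler's relation `2 - 2g = (J - 1) - n + 1`, where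
`J = cycleCount σ` counts the vertices of the map including the plant. -/
def IsPUMap (g n : ℕ) (α σ : Equiv.Perm (Fin (2 * n + 2))) : Prop :=
  (∀ x, α (α x) = x) ∧ (∀ x, α x ≠ x) ∧
  α ⟨0, by omega⟩ = ⟨2 * n + 1, by omega⟩ ∧
  α * σ = finRotate (2 * n + 2) ∧
  ((cycleCount σ : ℤ) - 1) - n + 1 = 2 - 2 * (g : ℤ)

/-- A planted unicellular map of genus `g` with `n` edges. -/
structure PUMap (g n : ℕ) where
  α : Equiv.Perm (Fin (2 * n + 2))
  σ : Equiv.Perm (Fin (2 * n + 2))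
  prop : IsPUMap g n α σ

/-- The embedding of the half-edges of the second map `u₂` into the glued map: the root
`1_{R_{u₂}}` goes to position `0` and the remaining half-edges of `u₂` follow the
`2k+2` half-edges of `u₁` (which occupy positions `1,…,2k+2`). -/
def glue2 (k : ℕ) (i : ℕ) : ℕ := if i = 0 then 0 else i + (2 * k + 2)

namespace Equiv.Perm

lemma SameCycle.of_forall_sameCycle_apply {α : Type*} [Finite α] {f g : Perm α}
    (h : ∀ x, g.SameCycle x (f x)) {x y : α} (hxy : f.SameCycle x y) : g.SameCycle x y := by
  obtain ⟨i, rfl⟩ := hxy.exists_nat_pow_eq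
  clear hxy
  induction i with
  | zero => exact .refl _ _
  | succ i ih => rw [pow_succ', mul_apply]; exact ih.trans (h _)

variable {α β : Type*} [Fintype α] [DecidableEq α] [Fintype β] [DecidableEq β]

lemma cycleType_permCongr (e : α ≃ β) (p : Perm α) :
    (e.permCongr p).cycleType = p.cycleType := by
  have hext :
      e.permCongr p = p.extendDomain (e.trans (subtypeUnivEquiv fun _ => trivial).symm) := by
    ext x
    rw [extendDomain_apply_subtype _ _ trivial]
    simp
  rw [hext, cycleType_extendDomain]

lemma cycleType_sumCongr (p : Perm α) (q : Perm β) :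
    (Perm.sumCongr p q).cycleType = p.cycleType + q.cycleType := by
  have hp : Perm.sumCongr p 1 = p.extendDomain (sumIsLeft (β := β)).symm := by
    ext (a | b)
    · exact (extendDomain_apply_image p (sumIsLeft (β := β)).symm a).symm
    · exact (extendDomain_apply_not_subtype _ _ (by simp)).symm
  have hq : Perm.sumCongr 1 q = q.extendDomain (sumIsRight (α := α)).symm := by
    ext (a | b)
    · exact (extendDomain_apply_not_subtype _ _ (by simp)).symm
    · exact (extendDomain_apply_image q (sumIsRight (α := α)).symm b).symm
  have hdisj : Disjoint (Perm.sumCongr p (1 : Perm β)) (Perm.sumCongr (1 : Perm α) q) := by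
    rintro (a | b)
    · right; rfl
    · left; rfl
  rw [← one_mul q, ← mul_one p, ← sumCongr_mul, hdisj.cycleType_mul, hp, hq,
    cycleType_extendDomain, cycleType_extendDomain, mul_one, one_mul]

lemma support_mul_swap_of_apply_eq_self {c : Perm α} {a b : α} (ha : c a = a) (hb : c b ≠ b) :
    (c * swap a b).support = insert a c.support := by
  have hab : a ≠ b := by rintro rfl; exact hb ha
  ext x
  rw [Finset.mem_insert, mem_support, mem_support, mul_apply, swap_apply_def]
  split_ifs with hxa hxb
  · subst hxa
    exact iff_of_true (fun h => hab (c.injective (ha.trans h.symm))) (Or.inl rfl)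
  · exact iff_of_true (by rw [ha, hxb]; exact hab) (Or.inr (hxb ▸ hb))
  · simp [hxa]

lemma IsCycle.mul_swap_of_apply_eq_self {c : Perm α} (hc : c.IsCycle) {a b : α} (ha : c a = a)
    (hb : c b ≠ b) : (c * swap a b).IsCycle := by
  have hab : a ≠ b := by rintro rfl; exact hb ha
  have hba : (c * swap a b) b = a := by rw [mul_apply, swap_apply_right, ha]
  have hab' : (c * swap a b) a = c b := by rw [mul_apply, swap_apply_left]
  have hstep : ∀ x, (c * swap a b).SameCycle x (c x) := fun x => by
    by_cases hxa : x = a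
    · rw [hxa, ha]
    by_cases hxb : x = b
    · rw [hxb]
      have h := sameCycle_apply_right.2 (sameCycle_apply_right.2 (SameCycle.refl (c * swap a b) b))
      rwa [hba, hab'] at h
    · have h := sameCycle_apply_right.2 (SameCycle.refl (c * swap a b) x)
      rwa [mul_apply, swap_apply_of_ne_of_ne hxa hxb] at h
  refine ⟨b, by rw [hba]; exact hab, fun y hy => ?_⟩
  rw [← mem_support, support_mul_swap_of_apply_eq_self ha hb, Finset.mem_insert] at hy
  rcases hy with rfl | hy
  · have h := sameCycle_apply_right.2 (SameCycle.refl (c * swap y b) b)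
    rwa [hba] at h
  · exact (hc.sameCycle hb (mem_support.1 hy)).of_forall_sameCycle_apply hstep

end Equiv.Perm

section CycleCount

open Equiv Equiv.Perm

variable {α β : Type*} [Fintype α] [DecidableEq α] [Fintype β] [DecidableEq β]

lemma cycleCount_eq_card_cycleType_add (σ : Perm α) :
    cycleCount σ = Multiset.card σ.cycleType + (Fintype.card α - σ.cycleType.sum) := by
  have hfix : (Finset.univ.filter fun x => σ x = x) = σ.supportᶜ := by
    ext x; simp
  rw [cycleCount, hfix, Finset.card_compl, sum_cycleType]

lemma cycleCount_permCongr (e : α ≃ β) (p : Perm α) :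
    cycleCount (e.permCongr p) = cycleCount p := by
  rw [cycleCount_eq_card_cycleType_add, cycleCount_eq_card_cycleType_add, cycleType_permCongr, Fintype.card_congr e]

lemma cycleCount_sumCongr (p : Perm α) (q : Perm β) :
    cycleCount (Perm.sumCongr p q) = cycleCount p + cycleCount q := by
  have := p.sum_cycleType_le
  have := q.sum_cycleType_le
  rw [cycleCount_eq_card_cycleType_add, cycleCount_eq_card_cycleType_add, cycleCount_eq_card_cycleType_add, cycleType_sumCongr, Fintype.card_sum,
    Multiset.card_add, Multiset.sum_add]
  omega

/-- Multiplying by the transposition attaches the fixed point `a` to the cycle through `b`. -/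
lemma cycleCount_mul_swap_of_apply_eq_self {s : Perm α} {a b : α} (hab : a ≠ b) (ha : s a = a) :
    cycleCount (s * swap a b) + 1 = cycleCount s := by
  have hle := (s * swap a b).sum_cycleType_le
  by_cases hb : s b = b
  · have hdisj : Disjoint s (swap a b) := by
      simp [disjoint_iff_disjoint_support, support_swap hab, ha, hb]
    have hct : (s * swap a b).cycleType = s.cycleType + {2} := by
      rw [hdisj.cycleType_mul, (isCycle_swap hab).cycleType, card_support_swap hab]
    rw [hct] at hle
    rw [cycleCount_eq_card_cycleType_add, cycleCount_eq_card_cycleType_add, hct]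
    simp only [Multiset.card_add, Multiset.sum_add, Multiset.card_singleton,
      Multiset.sum_singleton] at hle ⊢
    omega
  · set c := s.cycleOf b
    have hcyc : c.IsCycle := isCycle_cycleOf s hb
    have hca : c a = a := by simp [c, cycleOf_apply, ha]
    have hcb : c b ≠ b := by rwa [cycleOf_apply_self]
    have hdc : Disjoint (s * c⁻¹) c := disjoint_mul_inv_of_mem_cycleFactorsFinset
      (cycleOf_mem_cycleFactorsFinset_iff.2 (mem_support.2 hb))
    have hdc' : Disjoint (s * c⁻¹) (c * swap a b) := by
      rw [disjoint_iff_disjoint_support, support_mul_swap_of_apply_eq_self hca hcb,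
        Finset.disjoint_insert_right, notMem_support, mul_apply, inv_eq_iff_eq.2 hca.symm]
      exact ⟨ha, disjoint_iff_disjoint_support.1 hdc⟩
    have hsplit : s * swap a b = s * c⁻¹ * (c * swap a b) := by
      rw [← mul_assoc, inv_mul_cancel_right]
    have hct : (s * swap a b).cycleType = (s * c⁻¹).cycleType + {c.support.card + 1} := by
      rw [hsplit, hdc'.cycleType_mul,
        (hcyc.mul_swap_of_apply_eq_self hca hcb).cycleType,
        support_mul_swap_of_apply_eq_self hca hcb,
        Finset.card_insert_of_notMem (fun h => mem_support.1 h hca)]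
    have hct' : s.cycleType = (s * c⁻¹).cycleType + {c.support.card} := by
      rw [← hcyc.cycleType, ← hdc.cycleType_mul, inv_mul_cancel_right]
    rw [hct] at hle
    rw [cycleCount_eq_card_cycleType_add, cycleCount_eq_card_cycleType_add, hct, hct']
    simp only [Multiset.card_add, Multiset.sum_add, Multiset.card_singleton,
      Multiset.sum_singleton] at hle ⊢
    omega

end CycleCount

section Gluing

open Equiv

variable {n k : ℕ}

lemma glue2_lt (hk : k ≤ n) {i : ℕ} (hi : i < 2 * (n - k) + 2) : glue2 k i < 2 * (n + 1) + 2 := by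
  unfold glue2; split <;> omega

def glueHalfEdges (hk : k ≤ n) :
    Fin (2 * k + 2) ⊕ Fin (2 * (n - k) + 2) → Fin (2 * (n + 1) + 2) :=
  Sum.elim (fun i => ⟨i + 1, by omega⟩) (fun j => ⟨glue2 k j, glue2_lt hk j.isLt⟩)

lemma glueHalfEdges_injective (hk : k ≤ n) : Function.Injective (glueHalfEdges hk) := by
  rintro (i | i) (j | j) h
  all_goals
    simp only [glueHalfEdges, glue2, Sum.elim_inl, Sum.elim_inr, Fin.mk.injEq] at h
    simp only [Sum.inl.injEq, Sum.inr.injEq, reduceCtorEq, Fin.ext_iff]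
    first | omega | split_ifs at h <;> omega

noncomputable def glueEquiv (hk : k ≤ n) :
    Fin (2 * k + 2) ⊕ Fin (2 * (n - k) + 2) ≃ Fin (2 * (n + 1) + 2) :=
  .ofBijective _ ((Fintype.bijective_iff_injective_and_card _).2
    ⟨glueHalfEdges_injective hk, by simp only [Fintype.card_sum, Fintype.card_fin]; omega⟩)

lemma glueEquiv_inl_val (hk : k ≤ n) (i : Fin (2 * k + 2)) :
    (glueEquiv hk (.inl i) : ℕ) = i + 1 := rfl

lemma glueEquiv_inr_val (hk : k ≤ n) (j : Fin (2 * (n - k) + 2)) :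
    (glueEquiv hk (.inr j) : ℕ) = glue2 k j := rfl

lemma eq_glueEquiv_permCongr_sumCongr (hk : k ≤ n) {α₁ : Perm (Fin (2 * k + 2))}
    {α₂ : Perm (Fin (2 * (n - k) + 2))} {A : Perm (Fin (2 * (n + 1) + 2))}
    (hA₁ : ∀ (i : Fin (2 * k + 2)) (x y : Fin (2 * (n + 1) + 2)),
      (x : ℕ) = (i : ℕ) + 1 → (y : ℕ) = (α₁ i : ℕ) + 1 → A x = y)
    (hA₂ : ∀ (i : Fin (2 * (n - k) + 2)) (x y : Fin (2 * (n + 1) + 2)),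
      (x : ℕ) = glue2 k i → (y : ℕ) = glue2 k (α₂ i) → A x = y) :
    A = (glueEquiv hk).permCongr (Perm.sumCongr α₁ α₂) := by
  ext1 x
  obtain ⟨z, rfl⟩ := (glueEquiv hk).surjective x
  rw [permCongr_apply, symm_apply_apply]
  rcases z with i | j
  · exact hA₁ i _ _ rfl rfl
  · exact hA₂ j _ _ rfl rfl

lemma val_finRotate {m : ℕ} (i : Fin (m + 1)) :
    (finRotate (m + 1) i : ℕ) = if (i : ℕ) = m then 0 else (i : ℕ) + 1 := by
  by_cases h : (i : ℕ) = m
  · rw [if_pos h, show i = Fin.last m from Fin.ext h, finRotate_last, Fin.val_zero]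
  · rw [if_neg h]
    exact coe_finRotate_of_ne_last (fun (hi : i = Fin.last m) => h (by rw [hi, Fin.val_last]))

lemma finRotate_eq_glueEquiv_permCongr (hk : k ≤ n) :
    finRotate (2 * (n + 1) + 2) = (glueEquiv hk).permCongr
      (Perm.sumCongr (finRotate _) (finRotate _) * swap (.inl (Fin.last _)) (.inr 0)) := by
  ext1 x
  obtain ⟨z, rfl⟩ := (glueEquiv hk).surjective x
  rw [permCongr_apply, symm_apply_apply, Perm.mul_apply, swap_apply_def]
  apply Fin.ext
  rcases z with i | j
  · have := i.isLt
    by_cases hi : i = Fin.last _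
    · subst hi
      rw [if_pos rfl, val_finRotate, glueEquiv_inl_val, Perm.sumCongr_apply, Sum.map_inr,
        glueEquiv_inr_val, val_finRotate, Fin.val_last, Fin.val_zero, glue2]
      split_ifs <;> omega
    · have hi' : (i : ℕ) ≠ 2 * k + 1 := fun h => hi (Fin.ext h)
      rw [if_neg (by simpa using hi), if_neg (by simp), val_finRotate, glueEquiv_inl_val,
        Perm.sumCongr_apply, Sum.map_inl, glueEquiv_inl_val, val_finRotate]
      split_ifs <;> omega
  · have := j.isLt
    by_cases hj : j = 0
    · subst hj
      rw [if_neg (by simp), if_pos rfl, val_finRotate, glueEquiv_inr_val, Perm.sumCongr_apply,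
        Sum.map_inl, glueEquiv_inl_val, val_finRotate, Fin.val_last, Fin.val_zero, glue2]
      split_ifs <;> omega
    · have hj' : (j : ℕ) ≠ 0 := fun h => hj (Fin.ext h)
      rw [if_neg (by simp), if_neg (by simpa using hj), val_finRotate, glueEquiv_inr_val,
        Perm.sumCongr_apply, Sum.map_inr, glueEquiv_inr_val, val_finRotate]
      unfold glue2
      split_ifs <;> omega

end Gluing

namespace IsPUMap

variable {g n : ℕ} {α σ : Equiv.Perm (Fin (2 * n + 2))}

lemma eq_inv_mul_finRotate (h : IsPUMap g n α σ) : σ = α⁻¹ * finRotate (2 * n + 2) :=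
  eq_inv_mul_of_mul_eq h.2.2.2.1

lemma apply_last (h : IsPUMap g n α σ) : σ (Fin.last _) = Fin.last _ := by
  rw [h.eq_inv_mul_finRotate, Equiv.Perm.mul_apply, finRotate_last, Equiv.Perm.inv_eq_iff_eq]
  show 0 = α ⟨2 * n + 1, by omega⟩
  rw [← h.2.2.1, h.1]
  rfl

end IsPUMap

/-- Let `u₁` be a planted unicellular map of genus `g₁` with `k` edges and
`u₂` one of genus `g₂` with `n-k` edges.  Glue the plant of `u₁` into the first vertex of
`u₂`: on half-edges, the `2k+2` half-edges of `u₁` are embedded as positions `1,…,2k+2`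
of `Fin (2*(n+1)+2)` (hypothesis `hA₁`, so the rainbow of `u₁` becomes a genuine edge)
and the half-edges of `u₂` are embedded via `glue2 k` (hypothesis `hA₂`); these two
embeddings partition `Fin (2*(n+1)+2)`, so they determine the glued edge involution `A`,
and the boundary cycle of the glued map is the concatenation of the two boundary cycles,
i.e. the standard rotation.  Then the resulting map — `A` together with the vertex
permutation `A⁻¹ * finRotate` — is a planted unicellular map with `n+1` edges and its
genus equals `g₁ + g₂`. -/
theorem stmt5 (n k g₁ g₂ : ℕ) (hk : k ≤ n)
    (u₁ : PUMap g₁ k) (u₂ : PUMap g₂ (n - k))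
    (A : Equiv.Perm (Fin (2 * (n + 1) + 2)))
    (hA₁ : ∀ (i : Fin (2 * k + 2)) (x y : Fin (2 * (n + 1) + 2)),
      (x : ℕ) = (i : ℕ) + 1 → (y : ℕ) = (u₁.α i : ℕ) + 1 → A x = y)
    (hA₂ : ∀ (i : Fin (2 * (n - k) + 2)) (x y : Fin (2 * (n + 1) + 2)),
      (x : ℕ) = glue2 k i → (y : ℕ) = glue2 k (u₂.α i) → A x = y) :
    IsPUMap (g₁ + g₂) (n + 1) A (A⁻¹ * finRotate (2 * (n + 1) + 2)) := by
  obtain ⟨inv₁, free₁, -, -, genus₁⟩ := u₁.prop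
  obtain ⟨inv₂, free₂, root₂, -, genus₂⟩ := u₂.prop
  set e := glueEquiv hk
  set S := Equiv.Perm.sumCongr u₁.α u₂.α
  have hA : A = e.permCongr S := eq_glueEquiv_permCongr_sumCongr hk hA₁ hA₂
  have hS_invol : ∀ z, S (S z) = z := by
    rintro (i | j) <;> simp [S, inv₁, inv₂]
  have hS_free : ∀ z, S z ≠ z := by
    rintro (i | j) <;> simp [S, free₁, free₂]
  have hvertex : A⁻¹ * finRotate _ = e.permCongr
      (Equiv.Perm.sumCongr u₁.σ u₂.σ * Equiv.swap (.inl (Fin.last _)) (.inr 0)) := by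
    have hinv : (e.permCongr S)⁻¹ = e.permCongr S⁻¹ := (map_inv e.permCongrHom S).symm
    rw [hA, hinv, finRotate_eq_glueEquiv_permCongr hk, ← Equiv.permCongr_mul, ← mul_assoc,
      Equiv.Perm.sumCongr_inv, Equiv.Perm.sumCongr_mul, ← u₁.prop.eq_inv_mul_finRotate,
      ← u₂.prop.eq_inv_mul_finRotate]
  have hcount : cycleCount (A⁻¹ * finRotate _) + 1 = cycleCount u₁.σ + cycleCount u₂.σ := by
    rw [hvertex, cycleCount_permCongr, cycleCount_mul_swap_of_apply_eq_self (by simp)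
      (by simp [u₁.prop.apply_last]), cycleCount_sumCongr]
  refine ⟨fun x => by simp [hA, hS_invol], fun x => by simp [hA, ← Equiv.eq_symm_apply, hS_free], ?_,
    mul_inv_cancel_left A _, by omega⟩
  refine hA₂ ⟨0, by omega⟩ _ _ rfl ?_
  rw [root₂, glue2, if_neg (Nat.succ_ne_zero _)]
  simp only
  omega
end

section
/- Cutting the edge {1, α(1)} in a unicellular map u ∈ U^{III}_{g+1,n+1} (i.e., restricting α to H₁ = {1,…,α(1)} and to its complement H₂, and splitting the vertex containing the half-edge α(1) accordingly) produces two unicellular maps u₁ and u₂ with k and n−k edges respectively (where α(1) = 2k), whose genera g₁, g₂ satisfy g₁ + g₂ = g + 1. -/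
/-!
Write `γ` for the boundary rotation, so that the vertex permutation of a map is `σ = α γ`.
Class III says that `α` preserves `H₁ = {1, …, 2k+2}`, so `α` is the disjoint union of its
restrictions `α₁, α₂` to `H₁` and to its complement, while `γ` is the union of the two boundary
rotations composed with the transposition `(0 2k+2)`. Hence `σ = (σ₁ ⊔ σ₂) (0 2k+2)`, where the
plant `2k+2` of `u₁` is a fixed point of `σ₁`. Multiplying by a transposition that moves a fixed
point merges two cycles, so `J(u) + 1 = J(u₁) + J(u₂)`, and Euler's relation gives
`g₁ + g₂ = g + 1`.

The pieces have nonnegative integral genus by `J(x) + J(y) ≤ |H| + J(x y)`, with equal parities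
by the sign, applied to `x = α`, `y = α γ`. This holds for all permutations because a
transposition changes the number of cycles by at most one.
-/

open Equiv Equiv.Perm Finset

section CycleCount

variable {β : Type*} [Fintype β] [DecidableEq β]

theorem cycleCount_add_card_support (σ : Perm β) :
    cycleCount σ + #σ.support = Multiset.card σ.cycleType + Fintype.card β := by
  have h : (univ.filter fun x => σ x = x) = σ.supportᶜ := by
    ext x; simp [mem_support]
  rw [cycleCount, h, card_compl]
  have := card_le_univ σ.support
  omega

theorem cycleCount_one : cycleCount (1 : Perm β) = Fintype.card β := by
  simpa using cycleCount_add_card_support (1 : Perm β)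

theorem Equiv.Perm.Disjoint.cycleCount_mul {f g : Perm β} (h : f.Disjoint g) :
    cycleCount (f * g) + Fintype.card β = cycleCount f + cycleCount g := by
  have hfg := cycleCount_add_card_support (f * g)
  have hf := cycleCount_add_card_support f
  have hg := cycleCount_add_card_support g
  rw [h.cycleType_mul, h.support_mul, Multiset.card_add,
    card_union_of_disjoint h.disjoint_support] at hfg
  omega

theorem Equiv.Perm.IsCycle.cycleCount_add_card_support {c : Perm β} (hc : c.IsCycle) :
    cycleCount c + #c.support = Fintype.card β + 1 := by
  have h := _root_.cycleCount_add_card_support c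
  rw [hc.cycleType, Multiset.card_singleton] at h
  omega

theorem cycleCount_extendDomain {α : Type*} [Fintype α] [DecidableEq α] {p : β → Prop}
    [DecidablePred p] (f : α ≃ Subtype p) (σ : Perm α) :
    cycleCount (σ.extendDomain f) + Fintype.card α = cycleCount σ + Fintype.card β := by
  have h := cycleCount_add_card_support (σ.extendDomain f)
  have h' := cycleCount_add_card_support σ
  rw [cycleType_extendDomain, card_support_extend_domain] at h
  have := card_le_univ σ.support
  omega

theorem sign_eq_neg_one_pow_cycleCount (σ : Perm β) :
    sign σ = (-1) ^ (cycleCount σ + Fintype.card β) := by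
  have h := cycleCount_add_card_support σ
  rw [sign_of_cycleType, sum_cycleType]
  obtain ⟨c, hc⟩ : ∃ c, cycleCount σ + Fintype.card β =
      #σ.support + Multiset.card σ.cycleType + 2 * c :=
    ⟨Fintype.card β - #σ.support, by have := card_le_univ σ.support; omega⟩
  rw [hc, pow_add _ (_ + _), pow_mul, neg_one_sq, one_pow, mul_one]

theorem Equiv.Perm.IsCycle.cycleCount_swap_mul {c : Perm β} (hc : c.IsCycle) {a : β}
    (ha : c a ≠ a) : cycleCount (swap a (c a) * c) = cycleCount c + 1 := by
  have hcc := hc.cycleCount_add_card_support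
  by_cases h2 : c (c a) = a
  · have hsw : c = swap a (c a) := hc.eq_swap_of_apply_apply_eq_self ha h2
    have h1 : swap a (c a) * c = 1 := by
      conv_lhs => arg 2; rw [hsw]
      exact swap_mul_self _ _
    have hcard := card_support_swap ha.symm
    rw [← hsw] at hcard
    rw [h1, cycleCount_one]
    omega
  · have h' := (hc.swap_mul ha h2).cycleCount_add_card_support
    rw [support_swap_mul_eq c a h2, card_sdiff_of_subset (by simpa using ha)] at h'
    have : 0 < #c.support := card_pos.2 ⟨a, mem_support.2 ha⟩
    simp only [card_singleton] at h'
    omega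

theorem cycleCount_swap_mul_of_apply_ne {σ : Perm β} {a : β} (ha : σ a ≠ a) :
    cycleCount (swap a (σ a) * σ) = cycleCount σ + 1 := by
  set c := σ.cycleOf a
  have hca : c a = σ a := σ.cycleOf_apply_self a
  have hamem : a ∈ c.support := mem_support.2 (hca ▸ ha)
  have hdisj : (σ * c⁻¹).Disjoint c :=
    disjoint_mul_inv_of_mem_cycleFactorsFinset
      (cycleOf_mem_cycleFactorsFinset_iff.2 (mem_support.2 ha))
  have hsw : (swap a (c a)).support ≤ c.support := by
    rw [support_swap (hca ▸ ha).symm]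
    exact insert_subset hamem (singleton_subset_iff.2 (apply_mem_support.2 hamem))
  have hσ : σ = σ * c⁻¹ * c := by group
  have key : swap a (σ a) * σ = σ * c⁻¹ * (swap a (c a) * c) := by
    calc swap a (σ a) * σ = swap a (c a) * (σ * c⁻¹) * c := by rw [hca, mul_assoc, ← hσ]
      _ = σ * c⁻¹ * swap a (c a) * c := by rw [← (hdisj.mono le_rfl hsw).commute.eq]
      _ = _ := mul_assoc _ _ _
  have hdisj' : (σ * c⁻¹).Disjoint (swap a (c a) * c) :=
    hdisj.mono le_rfl ((support_mul_le _ _).trans (sup_le hsw le_rfl))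
  have h1 := hdisj'.cycleCount_mul
  have h2 := hdisj.cycleCount_mul
  rw [← key] at h1
  rw [← hσ] at h2
  have h3 : cycleCount (swap a (c a) * c) = cycleCount c + 1 :=
    (σ.isCycle_cycleOf ha).cycleCount_swap_mul (hca ▸ ha)
  omega

theorem cycleCount_swap_mul_of_apply_eq {σ : Perm β} {a b : β} (ha : σ a = a) (hab : a ≠ b) :
    cycleCount (swap a b * σ) + 1 = cycleCount σ := by
  have h : (swap a b * σ) a ≠ a := by simpa [ha] using hab.symm
  have := cycleCount_swap_mul_of_apply_ne h
  rwa [mul_apply, ha, swap_apply_left, swap_mul_self_mul, eq_comm] at this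

theorem cycleCount_le_cycleCount_swap_mul_add_one (σ : Perm β) {a b : β} (hab : a ≠ b) :
    cycleCount σ ≤ cycleCount (swap a b * σ) + 1 := by
  induction hm : #σ.support using Nat.strong_induction_on generalizing σ a b with
  | _ m ih =>
  by_cases ha : σ a = a
  · have := cycleCount_swap_mul_of_apply_eq ha hab
    omega
  by_cases hb : σ a = b
  · have := cycleCount_swap_mul_of_apply_ne ha
    rw [hb] at this
    omega
  -- Detaching `c = σ a` adds a cycle and shrinks the support; `c` is reattached after the swap.
  set c := σ a with hc
  set σ' := swap a c * σ with hσ'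
  have hσ'a : σ' a = a := by rw [hσ', mul_apply, ← hc, swap_apply_right]
  have hca : c ≠ a := ha
  have hY : (swap c b * σ') a = a := by
    rw [mul_apply, hσ'a, swap_apply_of_ne_of_ne hca.symm hab]
  have hconj : swap a b * σ = swap a c * (swap c b * σ') := by
    have h := swap_apply_apply (swap a c) c b
    rw [swap_apply_right, swap_apply_of_ne_of_ne hab.symm (Ne.symm hb), swap_inv] at h
    rw [h, hσ', mul_assoc, mul_assoc]
  have h1 : cycleCount σ' = cycleCount σ + 1 := cycleCount_swap_mul_of_apply_ne ha
  have h2 := ih _ (hm ▸ card_support_swap_mul ha) σ' hb rfl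
  have h3 := cycleCount_swap_mul_of_apply_eq hY hca.symm
  rw [hconj]
  omega

theorem cycleCount_mul_swap_of_apply_eq {σ : Perm β} {a b : β} (hb : σ b = b) (hab : a ≠ b) :
    cycleCount (σ * swap a b) + 1 = cycleCount σ := by
  have hσa : b ≠ σ a := fun h => hab (σ.injective (hb.trans h)).symm
  rw [mul_swap_eq_swap_mul, hb, swap_comm]
  exact cycleCount_swap_mul_of_apply_eq hb hσa

theorem cycleCount_add_cycleCount_le (x y : Perm β) :
    cycleCount x + cycleCount y ≤ Fintype.card β + cycleCount (x * y) := by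
  induction hm : #x.support using Nat.strong_induction_on generalizing x with
  | _ m ih =>
  by_cases hx : x = 1
  · rw [hx, cycleCount_one, one_mul]
  obtain ⟨a, ha⟩ : ∃ a, x a ≠ a := by
    by_contra! h
    exact hx (Equiv.ext h)
  have h1 := cycleCount_swap_mul_of_apply_ne ha
  have h2 := ih _ (hm ▸ card_support_swap_mul ha) _ rfl
  have h3 : cycleCount (swap a (x a) * x * y) ≤ cycleCount (x * y) + 1 := by
    simpa only [mul_assoc, swap_mul_self_mul] using
      cycleCount_le_cycleCount_swap_mul_add_one (swap a (x a) * x * y) (Ne.symm ha)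
  omega

theorem exists_cycleCount_add_cycleCount_add_two_mul_eq (x y : Perm β) :
    ∃ G, cycleCount x + cycleCount y + 2 * G = Fintype.card β + cycleCount (x * y) := by
  have hsign : sign x * sign y * sign (x * y) = 1 := by
    rw [Perm.sign_mul, Int.units_mul_self]
  rw [sign_eq_neg_one_pow_cycleCount, sign_eq_neg_one_pow_cycleCount,
    sign_eq_neg_one_pow_cycleCount, ← pow_add, ← pow_add,
    neg_one_pow_eq_one_iff_even (by decide)] at hsign
  obtain ⟨r, hr⟩ := hsign
  have := cycleCount_add_cycleCount_le x y
  exact ⟨(Fintype.card β + cycleCount (x * y) - cycleCount x - cycleCount y) / 2, by omega⟩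

theorem two_mul_cycleCount_of_involutive {α : Perm β} (hinv : ∀ x, α (α x) = x)
    (hfree : ∀ x, α x ≠ x) : 2 * cycleCount α = Fintype.card β := by
  have hsupp : α.support = univ := eq_univ_iff_forall.2 fun x => mem_support.2 (hfree x)
  have hsq : α ^ 2 = 1 := Equiv.ext fun x => hinv x
  have hsum := sum_cycleType α
  rw [cycleType_of_pow_prime_eq_one hsq, Multiset.sum_replicate, smul_eq_mul] at hsum
  have h := cycleCount_add_card_support α
  rw [hsupp, card_univ] at h hsum
  omega

theorem cycleCount_finRotate (m : ℕ) : cycleCount (finRotate (m + 2)) = 1 := by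
  have h := (isCycle_finRotate (n := m)).cycleCount_add_card_support
  rw [support_finRotate, card_univ] at h
  omega

end CycleCount

theorem exists_isPUMap {m : ℕ} {α : Perm (Fin (2 * m + 2))} (hinv : ∀ x, α (α x) = x)
    (hfree : ∀ x, α x ≠ x) (hroot : α ⟨0, by omega⟩ = ⟨2 * m + 1, by omega⟩) :
    ∃ g, IsPUMap g m α (α * finRotate (2 * m + 2)) := by
  obtain ⟨G, hG⟩ := exists_cycleCount_add_cycleCount_add_two_mul_eq α (α * finRotate _)
  have hαα : α * α = 1 := Equiv.ext hinv
  have hcc := two_mul_cycleCount_of_involutive hinv hfree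
  rw [← mul_assoc, hαα, one_mul, cycleCount_finRotate, Fintype.card_fin] at hG
  rw [Fintype.card_fin] at hcc
  refine ⟨G, hinv, hfree, hroot, by rw [← mul_assoc, hαα, one_mul], ?_⟩
  omega

section ExtendDomain

variable {α₁ α₂ β : Type*} {p : β → Prop}

theorem exists_equiv_subtype_of_injective (e : α₁ → β) (he : Function.Injective e)
    (hp : ∀ x, p x ↔ ∃ i, e i = x) : ∃ f : α₁ ≃ Subtype p, ∀ i, (f i : β) = e i :=
  ⟨(Equiv.ofInjective e he).trans (Equiv.subtypeEquivRight fun x => (hp x).symm),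
    fun _ => rfl⟩

theorem exists_perm_apply_eq_of_forall_iff (f : α₁ ≃ Subtype p) (σ : Perm β)
    (hσ : ∀ x, p (σ x) ↔ p x) : ∃ τ : Perm α₁, ∀ i, (f (τ i) : β) = σ (f i) :=
  ⟨(f.trans (σ.subtypePerm hσ)).trans f.symm, fun i => by simp⟩

theorem disjoint_extendDomain_extendDomain [DecidablePred p] (f₁ : α₁ ≃ Subtype p)
    (f₂ : α₂ ≃ {x // ¬p x}) (τ₁ : Perm α₁) (τ₂ : Perm α₂) : (τ₁.extendDomain f₁).Disjoint (τ₂.extendDomain f₂) := by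
  intro x
  by_cases hx : p x
  · exact Or.inr (extendDomain_apply_not_subtype _ _ (not_not.2 hx))
  · exact Or.inl (extendDomain_apply_not_subtype _ _ hx)

theorem eq_extendDomain_mul_extendDomain [DecidablePred p] (f₁ : α₁ ≃ Subtype p)
    (f₂ : α₂ ≃ {x // ¬p x}) {σ : Perm β} {τ₁ : Perm α₁} {τ₂ : Perm α₂} (h₁ : ∀ i, (f₁ (τ₁ i) : β) = σ (f₁ i))
    (h₂ : ∀ j, (f₂ (τ₂ j) : β) = σ (f₂ j)) :
    σ = τ₁.extendDomain f₁ * τ₂.extendDomain f₂ := by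
  ext x
  by_cases hx : p x
  · obtain ⟨i, rfl⟩ : ∃ i, (f₁ i : β) = x := ⟨f₁.symm ⟨x, hx⟩, by simp⟩
    rw [mul_apply, extendDomain_apply_not_subtype τ₂ f₂ (not_not.2 (f₁ i).2),
      extendDomain_apply_image, h₁]
  · obtain ⟨j, rfl⟩ : ∃ j, (f₂ j : β) = x := ⟨f₂.symm ⟨x, hx⟩, by simp⟩
    rw [mul_apply, extendDomain_apply_image, extendDomain_apply_not_subtype τ₁ f₁ (f₂ (τ₂ j)).2,
      h₂]

theorem cycleCount_extendDomain_mul_extendDomain [DecidablePred p] [Fintype α₁] [DecidableEq α₁]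
    [Fintype α₂] [DecidableEq α₂] [Fintype β] [DecidableEq β] (f₁ : α₁ ≃ Subtype p)
    (f₂ : α₂ ≃ {x // ¬p x}) (τ₁ : Perm α₁) (τ₂ : Perm α₂) :
    cycleCount (τ₁.extendDomain f₁ * τ₂.extendDomain f₂) = cycleCount τ₁ + cycleCount τ₂ := by
  have h := (disjoint_extendDomain_extendDomain f₁ f₂ τ₁ τ₂).cycleCount_mul
  have h₁ := cycleCount_extendDomain f₁ τ₁
  have h₂ := cycleCount_extendDomain f₂ τ₂
  have hcard : Fintype.card α₁ + Fintype.card α₂ = Fintype.card β := by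
    rw [Fintype.card_congr f₁, Fintype.card_congr f₂, ← Fintype.card_sum]
    exact Fintype.card_congr (Equiv.sumCompl p)
  omega

end ExtendDomain

theorem exists_restrict_isPUMap {m : ℕ} {β : Type*} {p : β → Prop}
    (f : Fin (2 * m + 2) ≃ Subtype p) {α : Perm β} (hinv : ∀ x, α (α x) = x)
    (hfree : ∀ x, α x ≠ x) (hp : ∀ x, p (α x) ↔ p x)
    (hroot : α (f ⟨0, by omega⟩) = f ⟨2 * m + 1, by omega⟩) :
    ∃ α' : Perm (Fin (2 * m + 2)), (∀ i, (f (α' i) : β) = α (f i)) ∧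
      ∃ g, IsPUMap g m α' (α' * finRotate (2 * m + 2)) := by
  obtain ⟨α', hα'⟩ := exists_perm_apply_eq_of_forall_iff f α hp
  have hinv' : ∀ i, α' (α' i) = i :=
    fun i => f.injective (Subtype.val_injective (by rw [hα', hα', hinv]))
  have hfree' : ∀ i, α' i ≠ i := fun i h => hfree (f i) (by rw [← hα', h])
  exact ⟨α', hα', exists_isPUMap hinv' hfree'
    (f.injective (Subtype.val_injective (by rw [hα', hroot])))⟩

abbrev H₁ (k : ℕ) {m : ℕ} (x : Fin m) : Prop := 1 ≤ (x : ℕ) ∧ (x : ℕ) ≤ 2 * k + 2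

theorem H₁_apply_iff {N k : ℕ} {α : Perm (Fin (2 * N + 2))} (hinv : ∀ x, α (α x) = x)
    (hroot : α ⟨0, by omega⟩ = ⟨2 * N + 1, by omega⟩)
    (hIII : ∀ j : Fin (2 * N + 2), 1 < (j : ℕ) → j < α ⟨1, by omega⟩ → α j < α ⟨1, by omega⟩)
    (hk : (α ⟨1, by omega⟩ : ℕ) = 2 * k + 2) (x : Fin (2 * N + 2)) :
    H₁ k (α x) ↔ H₁ k x := by
  suffices h : ∀ x, H₁ k x → H₁ k (α x) from ⟨fun hx => hinv x ▸ h _ hx, h x⟩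
  have hk' : 2 * k + 2 ≤ 2 * N := by
    have h1 : α ⟨1, by omega⟩ ≠ α ⟨0, by omega⟩ := fun h => by simpa using α.injective h
    rw [hroot, Ne, Fin.ext_iff] at h1
    have := (α ⟨1, by omega⟩).isLt
    omega
  rintro x ⟨hx1, hx2⟩
  rcases Nat.lt_or_ge 1 x with hx1' | hx1'
  · rcases Nat.lt_or_ge x (2 * k + 2) with hx2' | hx2'
    · have hlt := hIII x hx1' (by rw [Fin.lt_def, hk]; exact hx2')
      rw [Fin.lt_def, hk] at hlt
      have hne : (α x : ℕ) ≠ 0 := fun h0 => by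
        have := congrArg Fin.val (hinv x)
        rw [show α x = ⟨0, by omega⟩ from Fin.ext h0, hroot, Fin.val_mk] at this
        omega
      exact ⟨by omega, hlt.le⟩
    · have : x = α ⟨1, by omega⟩ := Fin.ext (by rw [hk]; omega)
      rw [this, hinv]
      show 1 ≤ 1 ∧ 1 ≤ 2 * k + 2
      omega
  · have : x = ⟨1, by omega⟩ := Fin.ext (by simp only; omega)
    rw [this, H₁, hk]
    omega

theorem exists_equiv_H₁ (n k : ℕ) (hkn : k ≤ n) :
    ∃ f : Fin (2 * k + 2) ≃ {x : Fin (2 * (n + 1) + 2) // H₁ k x},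
      ∀ i, ((f i : Fin (2 * (n + 1) + 2)) : ℕ) = i + 1 := by
  obtain ⟨f, hf⟩ := exists_equiv_subtype_of_injective (p := H₁ k)
    (fun i : Fin (2 * k + 2) => (⟨i + 1, by omega⟩ : Fin (2 * (n + 1) + 2)))
    (fun i j h => Fin.ext (by simpa using h))
    (fun x => ⟨fun hx => ⟨⟨x - 1, by omega⟩, Fin.ext (by simp only; omega)⟩,
      by rintro ⟨i, rfl⟩; simp only [H₁]; omega⟩)
  exact ⟨f, fun i => by rw [hf]⟩

theorem exists_equiv_not_H₁ (n k : ℕ) (hkn : k ≤ n) :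
    ∃ f : Fin (2 * (n - k) + 2) ≃ {x : Fin (2 * (n + 1) + 2) // ¬H₁ k x},
      ∀ j, ((f j : Fin (2 * (n + 1) + 2)) : ℕ) = glue2 k j := by
  obtain ⟨f, hf⟩ := exists_equiv_subtype_of_injective (p := fun x => ¬H₁ k x)
    (fun j : Fin (2 * (n - k) + 2) =>
      (⟨glue2 k j, by unfold glue2; split <;> omega⟩ : Fin (2 * (n + 1) + 2)))
    (fun i j h => Fin.ext (by simp only [Fin.mk.injEq, glue2] at h; split_ifs at h <;> omega))
    (fun x => ⟨fun hx => ⟨⟨if (x : ℕ) = 0 then 0 else x - (2 * k + 2), by split <;> omega⟩,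
        Fin.ext (by simp only [H₁, glue2] at hx ⊢; split_ifs <;> omega)⟩,
      by rintro ⟨j, rfl⟩; simp only [H₁, glue2]; split <;> omega⟩)
  exact ⟨f, fun j => by rw [hf]⟩

theorem val_finRotate_two_mul_add_two {m : ℕ} (x : Fin (2 * m + 2)) :
    (finRotate (2 * m + 2) x : ℕ) = if (x : ℕ) = 2 * m + 1 then 0 else (x : ℕ) + 1 := by
  simp only [coe_finRotate (n := 2 * m + 1), Fin.ext_iff, Fin.val_last]

theorem finRotate_eq_extendDomain_mul_extendDomain_mul_swap {n k : ℕ} (hkn : k ≤ n)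
    {f₁ : Fin (2 * k + 2) ≃ {x : Fin (2 * (n + 1) + 2) // H₁ k x}}
    {f₂ : Fin (2 * (n - k) + 2) ≃ {x : Fin (2 * (n + 1) + 2) // ¬H₁ k x}}
    (hf₁ : ∀ i, ((f₁ i : Fin (2 * (n + 1) + 2)) : ℕ) = i + 1)
    (hf₂ : ∀ j, ((f₂ j : Fin (2 * (n + 1) + 2)) : ℕ) = glue2 k j) :
    finRotate (2 * (n + 1) + 2) =
      (finRotate _).extendDomain f₁ * (finRotate _).extendDomain f₂ *
        swap ⟨0, by omega⟩ ⟨2 * k + 2, by omega⟩ := by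
  rw [← mul_inv_eq_iff_eq_mul, swap_inv]
  ext x
  by_cases hx : H₁ k x
  · obtain ⟨i, rfl⟩ : ∃ i, (f₁ i : Fin _) = x := ⟨f₁.symm ⟨x, hx⟩, by simp⟩
    rw [mul_apply, mul_apply, extendDomain_apply_not_subtype _ f₂ (not_not.2 (f₁ i).2),
      extendDomain_apply_image, hf₁, swap_apply_def]
    have := i.isLt
    split_ifs <;> simp only [Fin.ext_iff, hf₁, val_finRotate_two_mul_add_two] at * <;>
      split_ifs at * <;> omega
  · obtain ⟨j, rfl⟩ : ∃ j, (f₂ j : Fin _) = x := ⟨f₂.symm ⟨x, hx⟩, by simp⟩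
    rw [mul_apply, mul_apply, extendDomain_apply_image,
      extendDomain_apply_not_subtype _ f₁ (f₂ _).2, hf₂, swap_apply_def]
    have := j.isLt
    split_ifs <;> simp only [Fin.ext_iff, hf₂, val_finRotate_two_mul_add_two, glue2] at * <;>
      split_ifs at * <;> omega

theorem cycleCount_mul_finRotate_add_one {n k : ℕ} (hkn : k ≤ n)
    {f₁ : Fin (2 * k + 2) ≃ {x : Fin (2 * (n + 1) + 2) // H₁ k x}}
    {f₂ : Fin (2 * (n - k) + 2) ≃ {x : Fin (2 * (n + 1) + 2) // ¬H₁ k x}}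
    (hf₁ : ∀ i, ((f₁ i : Fin (2 * (n + 1) + 2)) : ℕ) = i + 1)
    (hf₂ : ∀ j, ((f₂ j : Fin (2 * (n + 1) + 2)) : ℕ) = glue2 k j)
    {α : Perm (Fin (2 * (n + 1) + 2))} {α₁ : Perm (Fin (2 * k + 2))}
    {α₂ : Perm (Fin (2 * (n - k) + 2))}
    (hα₁ : ∀ i, (f₁ (α₁ i) : Fin (2 * (n + 1) + 2)) = α (f₁ i))
    (hα₂ : ∀ j, (f₂ (α₂ j) : Fin (2 * (n + 1) + 2)) = α (f₂ j))
    (hroot₁ : α₁ ⟨0, by omega⟩ = ⟨2 * k + 1, by omega⟩) :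
    cycleCount (α * finRotate _) + 1 =
      cycleCount (α₁ * finRotate _) + cycleCount (α₂ * finRotate _) := by
  have hcomm := (disjoint_extendDomain_extendDomain f₁ f₂ (finRotate _) α₂).commute
  have hcut : α * finRotate _ =
      (α₁ * finRotate _).extendDomain f₁ * (α₂ * finRotate _).extendDomain f₂ *
        swap ⟨0, by omega⟩ ⟨2 * k + 2, by omega⟩ := by
    rw [eq_extendDomain_mul_extendDomain f₁ f₂ hα₁ hα₂,
      finRotate_eq_extendDomain_mul_extendDomain_mul_swap hkn hf₁ hf₂, ← extendDomain_mul,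
      ← extendDomain_mul]
    simp only [mul_assoc]
    rw [← mul_assoc (α₂.extendDomain f₂), ← hcomm.eq, mul_assoc]
  have hlast : (f₁ ⟨2 * k + 1, by omega⟩ : Fin (2 * (n + 1) + 2)) = ⟨2 * k + 2, by omega⟩ :=
    Fin.ext (hf₁ _)
  have hfix : ((α₁ * finRotate _).extendDomain f₁ * (α₂ * finRotate _).extendDomain f₂)
      ⟨2 * k + 2, by omega⟩ = ⟨2 * k + 2, by omega⟩ := by
    rw [mul_apply, ← hlast, extendDomain_apply_not_subtype _ f₂ (not_not.2 (f₁ _).2),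
      extendDomain_apply_image, mul_apply, finRotate_last', hroot₁]
  rw [hcut, cycleCount_mul_swap_of_apply_eq hfix (by simp),
    cycleCount_extendDomain_mul_extendDomain]

/-- Let `u` be a planted unicellular map of genus `g+1` with `n+1` edges,
of class III: every half-edge strictly between `1` (index `1` in boundary order) and
`α(1)` satisfies `α(k) < α(1)` (hypothesis `hIII`).  Cutting the edge `{1, α(1)}` — that
is, restricting `α` to `H₁ = {1,…,α(1)}` (positions `1,…,2k+2`, with the cut edge
becoming the rainbow of `u₁`) and to its complement `H₂`, and splitting the vertex
containing `α(1)` accordingly — produces two planted unicellular maps `u₁` and `u₂`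
with `k` and `n-k` edges respectively (where `α(1)` is the last half-edge of `H₁`, a
set of `2k+2` half-edges), whose genera `g₁, g₂` satisfy `g₁ + g₂ = g + 1`.  The
conclusion records `u₁, u₂` through the gluing equations identifying their half-edges
inside `u`. -/
theorem stmt7 (g n k : ℕ) (u : PUMap (g + 1) (n + 1))
    (hIII : ∀ j : Fin (2 * (n + 1) + 2), 1 < (j : ℕ) → j < u.α ⟨1, by omega⟩ →
      u.α j < u.α ⟨1, by omega⟩)
    (hk : (u.α ⟨1, by omega⟩ : ℕ) = 2 * k + 2) :
    ∃ (g₁ g₂ : ℕ) (u₁ : PUMap g₁ k) (u₂ : PUMap g₂ (n - k)),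
      g₁ + g₂ = g + 1 ∧
      (∀ (i : Fin (2 * k + 2)) (x y : Fin (2 * (n + 1) + 2)),
        (x : ℕ) = (i : ℕ) + 1 → (y : ℕ) = (u₁.α i : ℕ) + 1 → u.α x = y) ∧
      (∀ (i : Fin (2 * (n - k) + 2)) (x y : Fin (2 * (n + 1) + 2)),
        (x : ℕ) = glue2 k i → (y : ℕ) = glue2 k (u₂.α i) → u.α x = y) := by
  obtain ⟨α, σ, hinv, hfree, hroot, hασ, hgenus⟩ := u
  have hkn : k ≤ n := by have := (α ⟨1, by omega⟩).isLt; omega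
  have hH₁ := H₁_apply_iff hinv hroot hIII hk
  obtain ⟨f₁, hf₁⟩ := exists_equiv_H₁ n k hkn
  obtain ⟨f₂, hf₂⟩ := exists_equiv_not_H₁ n k hkn
  have hroot₁ : α (f₁ ⟨0, by omega⟩) = f₁ ⟨2 * k + 1, by omega⟩ := by
    rw [show (f₁ ⟨0, by omega⟩ : Fin (2 * (n + 1) + 2)) = ⟨1, by omega⟩ from Fin.ext (hf₁ _)]
    exact Fin.ext (by rw [hk, hf₁])
  have hroot₂ : α (f₂ ⟨0, by omega⟩) = f₂ ⟨2 * (n - k) + 1, by omega⟩ := by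
    rw [show (f₂ ⟨0, by omega⟩ : Fin (2 * (n + 1) + 2)) = ⟨0, by omega⟩ from Fin.ext (hf₂ _),
      hroot]
    exact Fin.ext (by rw [hf₂, glue2, if_neg (by simp)]; simp only; omega)
  obtain ⟨α₁, hα₁, g₁, hu₁⟩ := exists_restrict_isPUMap f₁ hinv hfree hH₁ hroot₁
  obtain ⟨α₂, hα₂, g₂, hu₂⟩ :=
    exists_restrict_isPUMap f₂ hinv hfree (fun x => not_congr (hH₁ x)) hroot₂
  refine ⟨g₁, g₂, ⟨α₁, _, hu₁⟩, ⟨α₂, _, hu₂⟩, ?_, ?_, ?_⟩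
  · have hσ : σ = α * finRotate _ := by
      rw [eq_inv_mul_of_mul_eq hασ, inv_eq_of_mul_eq_one_right (Equiv.ext hinv)]
    have h := cycleCount_mul_finRotate_add_one hkn hf₁ hf₂ hα₁ hα₂ hu₁.2.2.1
    have h₁ := hu₁.2.2.2.2
    have h₂ := hu₂.2.2.2.2
    rw [hσ] at hgenus
    omega
  · intro i x y hx hy
    obtain rfl : x = f₁ i := Fin.ext (hx.trans (hf₁ i).symm)
    exact Fin.ext (by rw [← hα₁, hf₁, hy])
  · intro j x y hx hy
    obtain rfl : x = f₂ j := Fin.ext (hx.trans (hf₂ j).symm)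
    exact Fin.ext (by rw [← hα₂, hf₂, hy])
end

section
/- Let b = (L, β, τ) be a bicellular map with faces ω₁ and ω₂ as cycles of β∘τ. Then the condition that there exists x in ω₁ with β(x) in ω₂ is equivalent to the underlying graph (vertices = cycles of τ, edges = cycles of β) being connected, given that each face alone would otherwise correspond to a connected component. -/
/-!
Powers of the face permutation `β * τ` lie in `⟨β, τ⟩` and run through each face, so each face
lies in a single orbit of `⟨β, τ⟩`. A crossing edge `x ↦ β x` joins the two orbits. Conversely,
if `β` maps `ω₁` into itself then `β`, `β * τ` and hence `τ` all stabilize `ω₁`, so `ω₁` is a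
union of orbits and the action is not transitive.
-/

/-- The combinatorial data of a planted bicellular map with `n` edges, without the
crossing-edge requirement (which is the condition characterised in the statement) and
without the genus datum.  The `2n+4` half-edges are `Fin (2*n+4)` in boundary order
(index `0` is `1_R`, indices `1,…,m` the half-edges of `ω₁`, index `m+1` the plant
`m_R`, index `m+2` is `(m+1)_R`, indices `m+3,…,2n+2` the half-edges of `ω₂`, and index
`2n+3` the plant `2n_R`).  `β` is a fixed-point-free involution containing the rainbows
`(1_R, m_R)` and `((m+1)_R, 2n_R)`, and the face permutation `β ∘ τ` consists of exactly
the two cycles `ω₁ = (1_R, 1, …, m, m_R)` and `ω₂ = ((m+1)_R, m+1, …, 2n, 2n_R)`. -/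
structure BicellData (n : ℕ) where
  m : ℕ
  hm1 : 0 < m
  hm2 : m < 2 * n
  β : Equiv.Perm (Fin (2 * n + 4))
  τ : Equiv.Perm (Fin (2 * n + 4))
  hinv : ∀ x, β (β x) = x
  hfpf : ∀ x, β x ≠ x
  hr1 : β ⟨0, by omega⟩ = ⟨m + 1, by omega⟩
  hr2 : β ⟨m + 2, by omega⟩ = ⟨2 * n + 3, by omega⟩
  hface : ∀ x : Fin (2 * n + 4),
    ((β * τ) x : ℕ) = if (x : ℕ) = m + 1 then 0
      else if (x : ℕ) = 2 * n + 3 then m + 2 else (x : ℕ) + 1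

open Equiv MulAction Pointwise

theorem Equiv.Perm.exists_mem_subgroup_apply_eq_iff_mem_orbit {α : Type*}
    (G : Subgroup (Perm α)) (x y : α) : (∃ p ∈ G, p x = y) ↔ y ∈ orbit G x := by
  simp [mem_orbit_iff, Subgroup.smul_def, Perm.smul_def]

namespace BicellData

variable {n : ℕ} (b : BicellData n)

def ω₁ : Set (Fin (2 * n + 4)) := {x | (x : ℕ) < b.m + 2}

/-- Its orbits are the connected components of the underlying graph: `τ` moves around a vertex
and `β` along an edge. -/
abbrev cartographicGroup : Subgroup (Perm (Fin (2 * n + 4))) := Subgroup.closure {b.β, b.τ}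

abbrev face : Perm (Fin (2 * n + 4)) := b.β * b.τ

lemma β_mem_cartographicGroup : b.β ∈ b.cartographicGroup :=
  Subgroup.subset_closure (Set.mem_insert _ _)

lemma τ_mem_cartographicGroup : b.τ ∈ b.cartographicGroup :=
  Subgroup.subset_closure (Set.mem_insert_of_mem _ rfl)

lemma val_face_apply {x : Fin (2 * n + 4)} (h₁ : (x : ℕ) ≠ b.m + 1) (h₂ : (x : ℕ) ≠ 2 * n + 3) :
    (b.face x : ℕ) = x + 1 := by
  rw [b.hface, if_neg h₁, if_neg h₂]

lemma val_face_pow_apply {x : Fin (2 * n + 4)} {k : ℕ}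
    (h : (x : ℕ) + k ≤ b.m + 1 ∨ b.m + 2 ≤ x ∧ (x : ℕ) + k ≤ 2 * n + 3) :
    ((b.face ^ k) x : ℕ) = x + k := by
  have hm := b.hm2
  induction k with
  | zero => rfl
  | succ k ih =>
    rw [pow_succ', Perm.mul_apply, b.val_face_apply (by omega) (by omega), ih (by omega)]
    omega

lemma face_pow_mem_cartographicGroup (k : ℕ) : b.face ^ k ∈ b.cartographicGroup :=
  pow_mem (mul_mem b.β_mem_cartographicGroup b.τ_mem_cartographicGroup) k

lemma orbit_eq_of_le {x y : Fin (2 * n + 4)} (hxy : (x : ℕ) ≤ y)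
    (h : (y : ℕ) < b.m + 2 ∨ b.m + 2 ≤ (x : ℕ)) :
    orbit b.cartographicGroup x = orbit b.cartographicGroup y := by
  have := y.isLt
  refine (orbit_eq_iff.mpr ((Perm.exists_mem_subgroup_apply_eq_iff_mem_orbit _ x y).mp
    ⟨_, b.face_pow_mem_cartographicGroup (y - x), Fin.ext ?_⟩)).symm
  rw [b.val_face_pow_apply (by omega)]
  omega

lemma orbit_eq_of_mem_ω₁_iff {x y : Fin (2 * n + 4)} (h : x ∈ b.ω₁ ↔ y ∈ b.ω₁) :
    orbit b.cartographicGroup x = orbit b.cartographicGroup y := by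
  simp only [ω₁, Set.mem_ofPred_eq] at h
  rcases le_total (x : ℕ) y with hxy | hyx
  · exact b.orbit_eq_of_le hxy (by omega)
  · exact (b.orbit_eq_of_le hyx (by omega)).symm

lemma β_mem_stabilizer_ω₁ (h : ∀ x ∈ b.ω₁, b.β x ∈ b.ω₁) :
    b.β ∈ stabilizer (Perm (Fin (2 * n + 4))) b.ω₁ := by
  refine mem_stabilizer_set.mpr fun x ↦ ⟨fun hx ↦ ?_, h x⟩
  simpa [Perm.smul_def, b.hinv] using h _ hx

lemma face_mem_stabilizer_ω₁ : b.face ∈ stabilizer (Perm (Fin (2 * n + 4))) b.ω₁ := by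
  refine mem_stabilizer_set.mpr fun x ↦ ?_
  have hm := b.hm2
  simp only [ω₁, Set.mem_ofPred_eq, Perm.smul_def, b.hface]
  split_ifs <;> omega

lemma cartographicGroup_le_stabilizer_ω₁ (h : ∀ x ∈ b.ω₁, b.β x ∈ b.ω₁) :
    b.cartographicGroup ≤ stabilizer (Perm (Fin (2 * n + 4))) b.ω₁ := by
  have hβ := b.β_mem_stabilizer_ω₁ h
  have hτ : b.τ = b.β⁻¹ * b.face := by simp
  refine (Subgroup.closure_le _).mpr (Set.insert_subset hβ (Set.singleton_subset_iff.mpr ?_))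
  rw [hτ]
  exact mul_mem (inv_mem hβ) b.face_mem_stabilizer_ω₁

end BicellData

/-- For bicellular map data `b = (L, β, τ)` with faces `ω₁` (the
half-edges of index `< m+2`) and `ω₂` (the rest), the condition that there exists
`x ∈ ω₁` with `β x ∈ ω₂` is equivalent to the connectivity of the underlying graph
(vertices = cycles of `τ`, edges = cycles of `β`), expressed as transitivity of the
action of the subgroup generated by `β` and `τ` on the half-edges — without a crossing
edge, each face alone would correspond to a connected component. -/
theorem stmt13 (n : ℕ) (b : BicellData n) :
    (∃ x : Fin (2 * n + 4), (x : ℕ) < b.m + 2 ∧ b.m + 2 ≤ (b.β x : ℕ)) ↔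
    (∀ x y : Fin (2 * n + 4),
      ∃ p ∈ Subgroup.closure ({b.β, b.τ} : Set (Equiv.Perm (Fin (2 * n + 4)))),
        p x = y) := by
  constructor
  · rintro ⟨x₀, hx₀, hβx₀⟩ x y
    have hall (z : Fin (2 * n + 4)) :
        orbit b.cartographicGroup z = orbit b.cartographicGroup x₀ := by
      by_cases hz : z ∈ b.ω₁
      · exact b.orbit_eq_of_mem_ω₁_iff (iff_of_true hz hx₀)
      · rw [b.orbit_eq_of_mem_ω₁_iff (y := b.β x₀) (iff_of_false hz (not_lt.mpr hβx₀))]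
        exact orbit_smul (⟨b.β, b.β_mem_cartographicGroup⟩ : b.cartographicGroup) x₀
    rw [Perm.exists_mem_subgroup_apply_eq_iff_mem_orbit, ← orbit_eq_iff, hall y, hall x]
  · intro htrans
    by_contra! hno
    have hm := b.hm2
    obtain ⟨p, hp, hp₀⟩ := htrans ⟨0, by omega⟩ ⟨b.m + 2, by omega⟩
    have := mem_stabilizer_set.mp (b.cartographicGroup_le_stabilizer_ω₁ hno hp) ⟨0, by omega⟩
    rw [Perm.smul_def, hp₀] at this
    simp [BicellData.ω₁] at this
end
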